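/- (Theorem 1, converse direction.) Suppose (p*, p̂*) is a global maximizer of Σ_{l=1}^L Σ_{k=1}^K log₂(1 + SINR_{l,k}(p,p̂)) over {(p,p̂) : 0 ≤ p_{l,k} ≤ P, 0 ≤ p̂_{l,k} ≤ P for all l,k}. Set ρ*_{l,k} = √(p*_{l,k}), ρ̂*_{l,k} = √(p̂*_{l,k}), u*_{l,k} = √(MK) ρ*_{l,k} ρ̂*_{l,k} β_{l,k}^l / ũ_{l,k}(ρ̂*,ρ*), and w*_{l,k} = 1/e_{l,k}(u*,ρ̂*,ρ*). Then (u*, w*, ρ̂*, ρ*) is a global minimizer of F over the feasible set {u_{l,k} ∈ ℝ, w_{l,k} > 0, 0 ≤ ρ̂_{l,k} ≤ √P, 0 ≤ ρ_{l,k} ≤ √P for all l,k}. -/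

import Mathlib

open Finset

/-- Interference-plus-noise term `D_{l,k}(p, p̂)`.
`β l i t` denotes `β_{i,t}^l` (large-scale fading from user `t` in cell `i` to BS `l`). -/
noncomputable def Dterm (L K M : ℕ) (β : Fin L → Fin L → Fin K → ℝ) (σ2 : ℝ)
    (p phat : Fin L → Fin K → ℝ) (l : Fin L) (k : Fin K) : ℝ :=
  (M : ℝ) * K * ∑ i ∈ Finset.univ.erase l, p i k * phat i k * β l i k ^ 2
    + ((K : ℝ) * ∑ i, phat i k * β l i k + σ2) * ((∑ i, ∑ t, p i t * β l i t) + σ2)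

/-- Effective SINR of user `k` in cell `l`. -/
noncomputable def SINR (L K M : ℕ) (β : Fin L → Fin L → Fin K → ℝ) (σ2 : ℝ)
    (p phat : Fin L → Fin K → ℝ) (l : Fin L) (k : Fin K) : ℝ :=
  (M : ℝ) * K * p l k * phat l k * β l l k ^ 2 / Dterm L K M β σ2 p phat l k

/-- Mean square error `e_{l,k}(u, ρ̂, ρ)` of the auxiliary SISO system. -/
noncomputable def eMSE (L K M : ℕ) (β : Fin L → Fin L → Fin K → ℝ) (σ2 : ℝ)
    (u ρhat ρ : Fin L → Fin K → ℝ) (l : Fin L) (k : Fin K) : ℝ :=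
  (M : ℝ) * K * u l k ^ 2 * ∑ i, ρ i k ^ 2 * ρhat i k ^ 2 * β l i k ^ 2
    - 2 * Real.sqrt ((M : ℝ) * K) * ρ l k * ρhat l k * u l k * β l l k
    + u l k ^ 2 * ((K : ℝ) * ∑ i, ρhat i k ^ 2 * β l i k + σ2)
        * ((∑ i, ∑ t, ρ i t ^ 2 * β l i t) + σ2) + 1

/-- The quantity `ũ_{l,k}(ρ̂, ρ)`. -/
noncomputable def utilde (L K M : ℕ) (β : Fin L → Fin L → Fin K → ℝ) (σ2 : ℝ)
    (ρhat ρ : Fin L → Fin K → ℝ) (l : Fin L) (k : Fin K) : ℝ :=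
  (M : ℝ) * K * ∑ i, ρ i k ^ 2 * ρhat i k ^ 2 * β l i k ^ 2
    + ((K : ℝ) * ∑ i, ρhat i k ^ 2 * β l i k + σ2)
        * ((∑ i, ∑ t, ρ i t ^ 2 * β l i t) + σ2)

/-- The weighted-MMSE objective `F(u, w, ρ̂, ρ) = Σ_{l,k} (w_{l,k} e_{l,k} − ln w_{l,k})`. -/
noncomputable def Fobj (L K M : ℕ) (β : Fin L → Fin L → Fin K → ℝ) (σ2 : ℝ)
    (u w ρhat ρ : Fin L → Fin K → ℝ) : ℝ :=
  ∑ l, ∑ k, (w l k * eMSE L K M β σ2 u ρhat ρ l k - Real.log (w l k))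

/-- Update the `(l,k)` entry of a doubly-indexed vector to the value `x`. -/
noncomputable def updLK {L K : ℕ} (f : Fin L → Fin K → ℝ) (l : Fin L) (k : Fin K)
    (x : ℝ) : Fin L → Fin K → ℝ :=
  Function.update f l (Function.update (f l) k x)

-- Auxiliary lemmas
-- quadratic lower bound
lemma aux_quad {A b u : ℝ} (hA : 0 < A) :
    1 - b ^ 2 / A ≤ A * u ^ 2 - 2 * b * u + 1 := by
  have h : (A * u ^ 2 - 2 * b * u + 1) - (1 - b ^ 2 / A) = (A * u - b) ^ 2 / A := by
    field_simp; ring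
  nlinarith [div_nonneg (sq_nonneg (A * u - b)) hA.le]

lemma aux_quad_eq {A b : ℝ} (hA : 0 < A) :
    A * (b / A) ^ 2 - 2 * b * (b / A) + 1 = 1 - b ^ 2 / A := by
  field_simp; ring

lemma aux_w {w e : ℝ} (hw : 0 < w) (he : 0 < e) :
    1 + Real.log e ≤ w * e - Real.log w := by
  have h := Real.log_le_sub_one_of_pos (mul_pos hw he)
  rw [Real.log_mul hw.ne' he.ne'] at h
  linarith

lemma eMSE_eq (L K M : ℕ) (β : Fin L → Fin L → Fin K → ℝ) (σ2 : ℝ)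
    (u ρhat ρ : Fin L → Fin K → ℝ) (l : Fin L) (k : Fin K) :
    eMSE L K M β σ2 u ρhat ρ l k =
      utilde L K M β σ2 ρhat ρ l k * u l k ^ 2
        - 2 * (Real.sqrt ((M : ℝ) * K) * ρ l k * ρhat l k * β l l k) * u l k + 1 := by
  simp only [eMSE, utilde]; ring

lemma utilde_pos (L K M : ℕ) (β : Fin L → Fin L → Fin K → ℝ)
    (hβ : ∀ l i t, 0 < β l i t) (σ2 : ℝ) (hσ : 0 < σ2)
    (ρhat ρ : Fin L → Fin K → ℝ) (l : Fin L) (k : Fin K) :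
    0 < utilde L K M β σ2 ρhat ρ l k := by
  unfold utilde
  have h1 : 0 ≤ (M : ℝ) * K * ∑ i, ρ i k ^ 2 * ρhat i k ^ 2 * β l i k ^ 2 := by positivity
  have h2 : 0 < (K : ℝ) * ∑ i, ρhat i k ^ 2 * β l i k + σ2 := by
    have : 0 ≤ (K : ℝ) * ∑ i, ρhat i k ^ 2 * β l i k :=
      mul_nonneg (by positivity)
        (Finset.sum_nonneg fun i _ => mul_nonneg (sq_nonneg _) (hβ l i k).le)
    linarith
  have h3 : 0 < (∑ i, ∑ t, ρ i t ^ 2 * β l i t) + σ2 := by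
    have : 0 ≤ ∑ i, ∑ t, ρ i t ^ 2 * β l i t :=
      Finset.sum_nonneg fun i _ => Finset.sum_nonneg fun t _ =>
        mul_nonneg (sq_nonneg _) (hβ l i t).le
    linarith
  nlinarith [mul_pos h2 h3]

lemma Dsq_pos (L K M : ℕ) (β : Fin L → Fin L → Fin K → ℝ)
    (hβ : ∀ l i t, 0 < β l i t) (σ2 : ℝ) (hσ : 0 < σ2)
    (ρhat ρ : Fin L → Fin K → ℝ) (l : Fin L) (k : Fin K) :
    0 < Dterm L K M β σ2 (fun i t => ρ i t ^ 2) (fun i t => ρhat i t ^ 2) l k := by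
  unfold Dterm
  have h1 : 0 ≤ (M : ℝ) * K * ∑ i ∈ Finset.univ.erase l,
      ρ i k ^ 2 * ρhat i k ^ 2 * β l i k ^ 2 := by positivity
  have h2 : 0 < (K : ℝ) * ∑ i, ρhat i k ^ 2 * β l i k + σ2 := by
    have : 0 ≤ (K : ℝ) * ∑ i, ρhat i k ^ 2 * β l i k :=
      mul_nonneg (by positivity)
        (Finset.sum_nonneg fun i _ => mul_nonneg (sq_nonneg _) (hβ l i k).le)
    linarith
  have h3 : 0 < (∑ i, ∑ t, ρ i t ^ 2 * β l i t) + σ2 := by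
    have : 0 ≤ ∑ i, ∑ t, ρ i t ^ 2 * β l i t :=
      Finset.sum_nonneg fun i _ => Finset.sum_nonneg fun t _ =>
        mul_nonneg (sq_nonneg _) (hβ l i t).le
    linarith
  nlinarith [mul_pos h2 h3]

lemma utilde_split (L K M : ℕ) (β : Fin L → Fin L → Fin K → ℝ) (σ2 : ℝ)
    (ρhat ρ : Fin L → Fin K → ℝ) (l : Fin L) (k : Fin K) :
    utilde L K M β σ2 ρhat ρ l k =
      Dterm L K M β σ2 (fun i t => ρ i t ^ 2) (fun i t => ρhat i t ^ 2) l k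
        + (Real.sqrt ((M : ℝ) * K) * ρ l k * ρhat l k * β l l k) ^ 2 := by
  have hs : Real.sqrt ((M : ℝ) * K) ^ 2 = (M : ℝ) * K :=
    Real.sq_sqrt (by positivity)
  simp only [utilde, Dterm]
  rw [Finset.sum_erase_eq_sub (Finset.mem_univ l)]
  rw [mul_pow, mul_pow, mul_pow, hs]
  ring
open Finset

lemma one_add_SINR_sq (L K M : ℕ) (β : Fin L → Fin L → Fin K → ℝ)
    (hβ : ∀ l i t, 0 < β l i t) (σ2 : ℝ) (hσ : 0 < σ2)
    (ρhat ρ : Fin L → Fin K → ℝ) (l : Fin L) (k : Fin K) :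
    1 + SINR L K M β σ2 (fun i t => ρ i t ^ 2) (fun i t => ρhat i t ^ 2) l k =
      utilde L K M β σ2 ρhat ρ l k /
        Dterm L K M β σ2 (fun i t => ρ i t ^ 2) (fun i t => ρhat i t ^ 2) l k := by
  have hD := Dsq_pos L K M β hβ σ2 hσ ρhat ρ l k
  have hsplit := utilde_split L K M β σ2 ρhat ρ l k
  have hs : Real.sqrt ((M : ℝ) * K) ^ 2 = (M : ℝ) * K := Real.sq_sqrt (by positivity)
  have hb2 : (Real.sqrt ((M : ℝ) * K) * ρ l k * ρhat l k * β l l k) ^ 2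
      = (M : ℝ) * K * ρ l k ^ 2 * ρhat l k ^ 2 * β l l k ^ 2 := by
    rw [mul_pow, mul_pow, mul_pow, hs]
  simp only [SINR]
  rw [hsplit, hb2, add_div, div_self hD.ne']

lemma pointwise_le (L K M : ℕ) (β : Fin L → Fin L → Fin K → ℝ)
    (hβ : ∀ l i t, 0 < β l i t) (σ2 : ℝ) (hσ : 0 < σ2)
    (u w ρhat ρ : Fin L → Fin K → ℝ) (l : Fin L) (k : Fin K) (hw : 0 < w l k) :
    1 - Real.log (1 + SINR L K M β σ2 (fun i t => ρ i t ^ 2)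
        (fun i t => ρhat i t ^ 2) l k)
      ≤ w l k * eMSE L K M β σ2 u ρhat ρ l k - Real.log (w l k) := by
  set A := utilde L K M β σ2 ρhat ρ l k with hAdef
  set D := Dterm L K M β σ2 (fun i t => ρ i t ^ 2) (fun i t => ρhat i t ^ 2) l k with hDdef
  set b := Real.sqrt ((M : ℝ) * K) * ρ l k * ρhat l k * β l l k with hbdef
  have hA : 0 < A := utilde_pos L K M β hβ σ2 hσ ρhat ρ l k
  have hD : 0 < D := Dsq_pos L K M β hβ σ2 hσ ρhat ρ l k
  have hsplit : A = D + b ^ 2 := utilde_split L K M β σ2 ρhat ρ l k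
  have hminle : D / A ≤ eMSE L K M β σ2 u ρhat ρ l k := by
    rw [eMSE_eq]
    have h := aux_quad (b := b) (u := u l k) hA
    have hda : D / A = 1 - b ^ 2 / A := by
      rw [hsplit]; field_simp; ring
    rw [← hAdef, ← hbdef]
    linarith [h, hda]
  have hmin : 0 < D / A := div_pos hD hA
  have he : 0 < eMSE L K M β σ2 u ρhat ρ l k := lt_of_lt_of_le hmin hminle
  have h1 : 1 + Real.log (eMSE L K M β σ2 u ρhat ρ l k)
      ≤ w l k * eMSE L K M β σ2 u ρhat ρ l k - Real.log (w l k) := aux_w hw he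
  have h2 : Real.log (D / A) ≤ Real.log (eMSE L K M β σ2 u ρhat ρ l k) :=
    Real.log_le_log hmin hminle
  have h3 : 1 + SINR L K M β σ2 (fun i t => ρ i t ^ 2) (fun i t => ρhat i t ^ 2) l k
      = A / D := one_add_SINR_sq L K M β hβ σ2 hσ ρhat ρ l k
  rw [h3]
  have h4 : Real.log (A / D) = - Real.log (D / A) := by
    rw [← Real.log_inv]; congr 1
    rw [inv_div]
  linarith

lemma pointwise_eq (L K M : ℕ) (β : Fin L → Fin L → Fin K → ℝ)
    (hβ : ∀ l i t, 0 < β l i t) (σ2 : ℝ) (hσ : 0 < σ2)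
    (u w ρhat ρ : Fin L → Fin K → ℝ) (l : Fin L) (k : Fin K)
    (hu : u l k = Real.sqrt ((M : ℝ) * K) * ρ l k * ρhat l k * β l l k /
        utilde L K M β σ2 ρhat ρ l k)
    (hw : w l k = 1 / eMSE L K M β σ2 u ρhat ρ l k) :
    0 < w l k ∧
    w l k * eMSE L K M β σ2 u ρhat ρ l k - Real.log (w l k) =
      1 - Real.log (1 + SINR L K M β σ2 (fun i t => ρ i t ^ 2)
        (fun i t => ρhat i t ^ 2) l k) := by
  set A := utilde L K M β σ2 ρhat ρ l k with hAdef
  set D := Dterm L K M β σ2 (fun i t => ρ i t ^ 2) (fun i t => ρhat i t ^ 2) l k with hDdef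
  set b := Real.sqrt ((M : ℝ) * K) * ρ l k * ρhat l k * β l l k with hbdef
  have hA : 0 < A := utilde_pos L K M β hβ σ2 hσ ρhat ρ l k
  have hD : 0 < D := Dsq_pos L K M β hβ σ2 hσ ρhat ρ l k
  have hsplit : A = D + b ^ 2 := utilde_split L K M β σ2 ρhat ρ l k
  have heval : eMSE L K M β σ2 u ρhat ρ l k = D / A := by
    rw [eMSE_eq, hu]
    have := aux_quad_eq (b := b) hA
    have hda : D / A = 1 - b ^ 2 / A := by rw [hsplit]; field_simp; ring
    rw [← hAdef, ← hbdef] at *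
    rw [this, hda]
  have he : 0 < eMSE L K M β σ2 u ρhat ρ l k := heval ▸ div_pos hD hA
  have hwpos : 0 < w l k := by rw [hw]; positivity
  refine ⟨hwpos, ?_⟩
  have h3 : 1 + SINR L K M β σ2 (fun i t => ρ i t ^ 2) (fun i t => ρhat i t ^ 2) l k
      = A / D := one_add_SINR_sq L K M β hβ σ2 hσ ρhat ρ l k
  rw [h3, hw, heval]
  rw [one_div, inv_div]
  have h5 : A / D * (D / A) = 1 := by field_simp
  rw [h5]

/-- Theorem 1, converse direction: from a global maximizer `(p*, p̂*)` of the
sum spectral efficiency, the stated `(u*, w*, ρ̂*, ρ*)` is a global minimizer of `F`. -/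
theorem stmt_9 (L K M : ℕ) (hL : 0 < L) (hK : 0 < K) (hM : 0 < M)
    (β : Fin L → Fin L → Fin K → ℝ) (hβ : ∀ l i t, 0 < β l i t)
    (σ2 : ℝ) (hσ : 0 < σ2) (P : ℝ) (hP : 0 < P)
    (pstar phatstar : Fin L → Fin K → ℝ)
    (hp : ∀ l k, pstar l k ∈ Set.Icc 0 P) (hphat : ∀ l k, phatstar l k ∈ Set.Icc 0 P)
    (hmax : ∀ (p phat : Fin L → Fin K → ℝ),
      (∀ l k, p l k ∈ Set.Icc 0 P) → (∀ l k, phat l k ∈ Set.Icc 0 P) →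
      (∑ l, ∑ k, Real.logb 2 (1 + SINR L K M β σ2 p phat l k)) ≤
        ∑ l, ∑ k, Real.logb 2 (1 + SINR L K M β σ2 pstar phatstar l k))
    (ρstar ρhatstar ustar wstar : Fin L → Fin K → ℝ)
    (hρstar : ∀ l k, ρstar l k = Real.sqrt (pstar l k))
    (hρhatstar : ∀ l k, ρhatstar l k = Real.sqrt (phatstar l k))
    (hustar : ∀ l k, ustar l k =
      Real.sqrt ((M : ℝ) * K) * ρstar l k * ρhatstar l k * β l l k /
        utilde L K M β σ2 ρhatstar ρstar l k)
    (hwstar : ∀ l k, wstar l k = 1 / eMSE L K M β σ2 ustar ρhatstar ρstar l k) :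
    (∀ l k, 0 < wstar l k ∧ ρhatstar l k ∈ Set.Icc 0 (Real.sqrt P) ∧
      ρstar l k ∈ Set.Icc 0 (Real.sqrt P)) ∧
    ∀ (u w ρhat ρ : Fin L → Fin K → ℝ), (∀ l k, 0 < w l k) →
      (∀ l k, ρhat l k ∈ Set.Icc 0 (Real.sqrt P)) →
      (∀ l k, ρ l k ∈ Set.Icc 0 (Real.sqrt P)) →
      Fobj L K M β σ2 ustar wstar ρhatstar ρstar ≤ Fobj L K M β σ2 u w ρhat ρ := by
  have hps : (fun i t => ρstar i t ^ 2) = pstar := by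
    funext i t; rw [hρstar]; exact Real.sq_sqrt (hp i t).1
  have hphs : (fun i t => ρhatstar i t ^ 2) = phatstar := by
    funext i t; rw [hρhatstar]; exact Real.sq_sqrt (hphat i t).1
  have hpe : ∀ l k, 0 < wstar l k ∧
      wstar l k * eMSE L K M β σ2 ustar ρhatstar ρstar l k - Real.log (wstar l k) =
        1 - Real.log (1 + SINR L K M β σ2 (fun i t => ρstar i t ^ 2)
          (fun i t => ρhatstar i t ^ 2) l k) := fun l k =>
    pointwise_eq L K M β hβ σ2 hσ ustar wstar ρhatstar ρstar l k (hustar l k) (hwstar l k)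
  refine ⟨fun l k => ⟨(hpe l k).1, ?_, ?_⟩, ?_⟩
  · rw [hρhatstar]
    exact ⟨Real.sqrt_nonneg _, Real.sqrt_le_sqrt (hphat l k).2⟩
  · rw [hρstar]
    exact ⟨Real.sqrt_nonneg _, Real.sqrt_le_sqrt (hp l k).2⟩
  intro u w ρhat ρ hw hρhat hρ
  have hFstar : Fobj L K M β σ2 ustar wstar ρhatstar ρstar =
      ∑ l, ∑ k, (1 - Real.log (1 + SINR L K M β σ2 pstar phatstar l k)) := by
    unfold Fobj
    refine Finset.sum_congr rfl fun l _ => Finset.sum_congr rfl fun k _ => ?_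
    rw [(hpe l k).2, hps, hphs]
  have hFlow : ∑ l, ∑ k, (1 - Real.log (1 + SINR L K M β σ2 (fun i t => ρ i t ^ 2)
      (fun i t => ρhat i t ^ 2) l k)) ≤ Fobj L K M β σ2 u w ρhat ρ := by
    unfold Fobj
    refine Finset.sum_le_sum fun l _ => Finset.sum_le_sum fun k _ =>
      pointwise_le L K M β hβ σ2 hσ u w ρhat ρ l k (hw l k)
  have hfeas : ∀ (g : Fin L → Fin K → ℝ), (∀ l k, g l k ∈ Set.Icc 0 (Real.sqrt P)) →
      ∀ l k, (fun i t => g i t ^ 2) l k ∈ Set.Icc 0 P := by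
    intro g hg l k
    refine ⟨sq_nonneg _, ?_⟩
    have h1 := pow_le_pow_left₀ (hg l k).1 (hg l k).2 2
    simpa [Real.sq_sqrt hP.le] using h1
  have hlog := hmax _ _ (hfeas ρ hρ) (hfeas ρhat hρhat)
  have h2 : (0 : ℝ) < (Real.log 2)⁻¹ := inv_pos.mpr (Real.log_pos one_lt_two)
  simp only [Real.logb, div_eq_mul_inv, ← Finset.sum_mul] at hlog
  have hlog' : ∑ l, ∑ k, Real.log (1 + SINR L K M β σ2 (fun i t => ρ i t ^ 2)
        (fun i t => ρhat i t ^ 2) l k)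
      ≤ ∑ l, ∑ k, Real.log (1 + SINR L K M β σ2 pstar phatstar l k) :=
    le_of_mul_le_mul_right (by simpa [mul_comm] using hlog) h2
  rw [hFstar]
  refine le_trans ?_ hFlow
  simp only [Finset.sum_sub_distrib]
  linarith [hlog']
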